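/- arXiv:1707.04732 — 3 statements merged into one kernel-verified Lean document; each statement's English description precedes it below -/
import Mathlib

section
/- First quantifier elimination for n-th power predicates (existence): let ℓ ≥ 0, let u_0, …, u_{ℓ−1} be positive rational numbers and n_0, …, n_{ℓ−1} positive integers. Then there exists a positive rational x such that for every i < ℓ the number u_i·x is an n_i-th power of a rational number, if and only if for all i ≠ j the number u_i·u_j^{−1} is a d_{i,j}-th power of a rational number, where d_{i,j} = gcd(n_i, n_j). -/
/-!
In an abelian group the subgroups of `m`-th and `n`-th powers generate the subgroup of
`gcd m n`-th powers (Bézout), and if the group is torsion-free they intersect in the subgroup of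
`lcm m n`-th powers. Since `gcd` distributes over `lcm`, a solution `x` for some of the
constraints can be corrected by an `lcm`-th power, which keeps those constraints, so as to
satisfy one more constraint. The positive rationals form a torsion-free abelian group, and a
positive rational is an `n`-th power of a rational iff it is one of a positive rational.
-/

theorem Nat.gcd_lcm_distrib (a b c : ℕ) :
    Nat.gcd (Nat.lcm a b) c = Nat.lcm (Nat.gcd a c) (Nat.gcd b c) := by
  rcases eq_or_ne a 0 with rfl | ha
  · simp [Nat.lcm_eq_left (Nat.gcd_dvd_right b c)]
  rcases eq_or_ne b 0 with rfl | hb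
  · simp [Nat.lcm_eq_right (Nat.gcd_dvd_right a c)]
  rcases eq_or_ne c 0 with rfl | hc
  · simp
  refine Nat.eq_of_factorization_eq (Nat.gcd_ne_zero_right hc)
    (Nat.lcm_ne_zero (Nat.gcd_ne_zero_right hc) (Nat.gcd_ne_zero_right hc)) fun p => ?_
  simp only [Nat.factorization_gcd (Nat.lcm_ne_zero ha hb) hc, Nat.factorization_lcm ha hb,
    Nat.factorization_lcm (Nat.gcd_ne_zero_right hc) (Nat.gcd_ne_zero_right hc),
    Nat.factorization_gcd ha hc, Nat.factorization_gcd hb hc, Finsupp.inf_apply,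
    Finsupp.sup_apply]
  omega

theorem Nat.gcd_finset_lcm {ι : Type*} (s : Finset ι) (f : ι → ℕ) (c : ℕ) :
    Nat.gcd (s.lcm f) c = s.lcm fun i => Nat.gcd (f i) c := by
  classical
  induction s using Finset.induction_on with
  | empty => simp
  | insert a s _ ih => simp only [Finset.lcm_insert, ← ih]; exact Nat.gcd_lcm_distrib _ _ _

section PowMonoidHomRange

variable {G : Type*} [CommGroup G]

lemma range_powMonoidHom_le_of_dvd {d m : ℕ} (h : d ∣ m) :
    (powMonoidHom m : G →* G).range ≤ (powMonoidHom d).range := by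
  rintro _ ⟨y, rfl⟩
  obtain ⟨k, rfl⟩ := h
  exact ⟨y ^ k, by simp [← pow_mul, mul_comm]⟩

lemma range_powMonoidHom_gcd (m n : ℕ) :
    (powMonoidHom (m.gcd n) : G →* G).range =
      (powMonoidHom m).range ⊔ (powMonoidHom n).range := by
  refine le_antisymm ?_ (sup_le (range_powMonoidHom_le_of_dvd (m.gcd_dvd_left n))
    (range_powMonoidHom_le_of_dvd (m.gcd_dvd_right n)))
  rintro _ ⟨y, rfl⟩
  refine Subgroup.mem_sup.2
    ⟨(y ^ m.gcdA n) ^ m, ⟨_, rfl⟩, (y ^ m.gcdB n) ^ n, ⟨_, rfl⟩, ?_⟩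
  simp only [powMonoidHom_apply, ← zpow_natCast, ← zpow_mul, ← zpow_add, Nat.gcd_eq_gcd_ab]
  ring_nf

variable [IsMulTorsionFree G]

lemma range_powMonoidHom_lcm (m n : ℕ) :
    (powMonoidHom (m.lcm n) : G →* G).range =
      (powMonoidHom m).range ⊓ (powMonoidHom n).range := by
  refine le_antisymm (le_inf (range_powMonoidHom_le_of_dvd (m.dvd_lcm_left n))
    (range_powMonoidHom_le_of_dvd (m.dvd_lcm_right n))) ?_
  rintro _ ⟨⟨a, rfl⟩, ⟨b, hab⟩⟩
  simp only [powMonoidHom_apply] at hab ⊢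
  rcases Nat.eq_zero_or_pos (m.gcd n) with hg | hg
  · obtain ⟨rfl, rfl⟩ := Nat.gcd_eq_zero_iff.1 hg
    exact ⟨1, by simp⟩
  -- Bézout: if `gcd m n = m * A + n * B`, then `c = a ^ B * b ^ A` has `c ^ n = a ^ gcd m n`.
  set c := a ^ m.gcdB n * b ^ m.gcdA n
  have hc : c ^ n = a ^ m.gcd n := by
    have hab' : b ^ (n : ℤ) = a ^ (m : ℤ) := by exact_mod_cast hab
    rw [← zpow_natCast, ← zpow_natCast a, Nat.gcd_eq_gcd_ab, mul_zpow, ← zpow_mul, ← zpow_mul,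
      mul_comm (m.gcdA n : ℤ), zpow_mul b, hab', ← zpow_mul, ← zpow_add, add_comm,
      mul_comm (n : ℤ)]
  have hcn : c ^ (n / m.gcd n) = a := IsMulTorsionFree.pow_left_injective hg.ne' <| by
    simp only [← pow_mul, Nat.div_mul_cancel (m.gcd_dvd_right n), hc]
  refine ⟨c, ?_⟩
  rw [powMonoidHom_apply, Nat.lcm, Nat.mul_div_assoc _ (m.gcd_dvd_right n), pow_mul', hcn]

lemma range_powMonoidHom_finset_lcm {ι : Type*} (s : Finset ι) (n : ι → ℕ) :
    (powMonoidHom (s.lcm n) : G →* G).range = ⨅ i ∈ s, (powMonoidHom (n i)).range := by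
  classical
  induction s using Finset.induction_on with
  | empty => simpa using MonoidHom.range_eq_top.2 fun x : G => ⟨x, pow_one x⟩
  | insert a s _ ih =>
    rw [Finset.lcm_insert, Finset.iInf_insert, ← ih]
    exact range_powMonoidHom_lcm _ _

theorem exists_mul_mem_range_powMonoidHom {ι : Type*} (s : Finset ι) (u : ι → G)
    (n : ι → ℕ)
    (h : ∀ i ∈ s, ∀ j ∈ s, u i / u j ∈ (powMonoidHom ((n i).gcd (n j))).range) :
    ∃ x, ∀ i ∈ s, u i * x ∈ (powMonoidHom (n i)).range := by
  classical
  induction s using Finset.induction_on with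
  | empty => exact ⟨1, by simp⟩
  | insert a s _ ih =>
    obtain ⟨x, hx⟩ := ih fun i hi j hj => h i (by simp [hi]) j (by simp [hj])
    have hax : u a * x ∈ (powMonoidHom (s.lcm n)).range ⊔ (powMonoidHom (n a)).range := by
      rw [← range_powMonoidHom_gcd, Nat.gcd_finset_lcm, range_powMonoidHom_finset_lcm]
      refine Subgroup.mem_iInf.2 fun i => Subgroup.mem_iInf.2 fun hi => ?_
      rw [← div_mul_cancel (u a) (u i), mul_assoc, Nat.gcd_comm]
      exact mul_mem (h a (by simp) i (by simp [hi]))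
        (range_powMonoidHom_le_of_dvd ((n a).gcd_dvd_right _) (hx i hi))
    obtain ⟨z, hz, y, hy, hzy⟩ := Subgroup.mem_sup.1 hax
    refine ⟨x / z, fun i hi => ?_⟩
    rcases Finset.mem_insert.1 hi with rfl | hi
    · rwa [mul_div_assoc', ← hzy, mul_div_cancel_left]
    · rw [mul_div_assoc']
      exact div_mem (hx i hi) (range_powMonoidHom_le_of_dvd (Finset.dvd_lcm hi) hz)

theorem exists_mul_mem_range_powMonoidHom_iff {ι : Type*} (s : Finset ι) (u : ι → G)
    (n : ι → ℕ) :
    (∃ x, ∀ i ∈ s, u i * x ∈ (powMonoidHom (n i)).range) ↔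
      ∀ i ∈ s, ∀ j ∈ s, u i / u j ∈ (powMonoidHom ((n i).gcd (n j))).range := by
  refine ⟨fun ⟨x, hx⟩ i hi j hj => ?_, exists_mul_mem_range_powMonoidHom s u n⟩
  rw [← mul_div_mul_right_eq_div (u i) (u j) x]
  exact div_mem (range_powMonoidHom_le_of_dvd ((n i).gcd_dvd_left _) (hx i hi))
    (range_powMonoidHom_le_of_dvd ((n i).gcd_dvd_right _) (hx j hj))

end PowMonoidHomRange

theorem Positive.exists_coe_eq_pow_iff_mem_range {K : Type*} [Field K] [LinearOrder K]
    [IsStrictOrderedRing K] (q : {x : K // 0 < x}) (n : ℕ) :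
    (∃ y : K, (q : K) = y ^ n) ↔ q ∈ (powMonoidHom n).range := by
  refine ⟨fun ⟨y, hy⟩ => ?_, fun ⟨y, hy⟩ => ⟨y, by simp [← hy, Positive.val_pow]⟩⟩
  rcases eq_or_ne n 0 with rfl | hn
  · exact ⟨1, Subtype.ext (by simpa using hy.symm)⟩
  have hy0 : y ≠ 0 := by
    rintro rfl
    exact q.2.ne' (by simpa [zero_pow hn] using hy)
  refine ⟨⟨|y|, abs_pos.2 hy0⟩, Subtype.ext ?_⟩
  simp [Positive.val_pow, pow_abs, ← hy, abs_of_pos q.2]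

theorem first_QE_for_roots_general (ℓ : ℕ) (u : Fin ℓ → ℚ) (hu : ∀ i, 0 < u i)
    (n : Fin ℓ → ℕ) :
    (∃ x : ℚ, 0 < x ∧ ∀ i, ∃ y : ℚ, u i * x = y ^ n i) ↔
      ∀ i j : Fin ℓ, i ≠ j → ∃ y : ℚ, u i * (u j)⁻¹ = y ^ Nat.gcd (n i) (n j) := by
  let U : Fin ℓ → {q : ℚ // 0 < q} := fun i => ⟨u i, hu i⟩
  have key := exists_mul_mem_range_powMonoidHom_iff Finset.univ U n
  simp only [Finset.mem_univ, true_imp_iff, ← Positive.exists_coe_eq_pow_iff_mem_range,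
    Subtype.exists, exists_prop, Positive.val_mul, div_eq_mul_inv, Positive.coe_inv, U] at key
  rw [key]
  refine ⟨fun h i j _ => h i j, fun h i j => ?_⟩
  rcases eq_or_ne i j with rfl | hij
  · exact ⟨1, by simp [(hu i).ne']⟩
  · exact h i j hij

/-- **First quantifier elimination for `n`-th power predicates (existence).**
For positive rationals `u 0, …, u (ℓ-1)` and positive integers `n 0, …, n (ℓ-1)`,
there is a positive rational `x` with `u i * x` an `n i`-th power of a rational for all
`i`, if and only if `u i * (u j)⁻¹` is a `gcd (n i) (n j)`-th power of a rational for
all `i ≠ j`. -/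
theorem first_QE_for_roots (ℓ : ℕ) (u : Fin ℓ → ℚ) (hu : ∀ i, 0 < u i)
    (n : Fin ℓ → ℕ) (hn : ∀ i, 0 < n i) :
    (∃ x : ℚ, 0 < x ∧ ∀ i, ∃ y : ℚ, u i * x = y ^ n i) ↔
      ∀ i j : Fin ℓ, i ≠ j → ∃ y : ℚ, u i * (u j)⁻¹ = y ^ Nat.gcd (n i) (n j) :=
  first_QE_for_roots_general ℓ u hu n
end

section
/- Second quantifier elimination for n-th power predicates: let ℓ ≥ 1 and l ≥ 0, let u_0, …, u_{ℓ−1} and v_0, …, v_{l−1} be positive rational numbers, let n_0, …, n_{ℓ−1} and m_0, …, m_{l−1} be positive integers, let n be the least common multiple of the n_i, let c_0, …, c_{ℓ−1} be integers with ∑_{i<ℓ} c_i·(n/n_i) = 1, and set a = ∏_{i<ℓ} u_i^{−c_i·(n/n_i)}. Then there exists a positive rational x such that for every j < ℓ the number u_j·x is an n_j-th power of a rational number and for every k < l the number v_k·x is not an m_k-th power of a rational number, if and only if: for all i ≠ j the number u_i·u_j^{−1} is a gcd(n_i, n_j)-th power of a rational number, and for every k < l with m_k dividing n the number a·v_k is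 not an m_k-th power of a rational number. -/
/-!
Write `N = lcm nᵢ` and `eᵢ = cᵢ · (N / nᵢ)`, so that `∑ eᵢ = 1` and `nᵢ eᵢ = cᵢ N`, and put
`a = ∏ uᵢ^{-eᵢ}`. If `uⱼ x = yⱼ^{nⱼ}` for all `j`, then `uᵢ / uⱼ = (uᵢ x) / (uⱼ x)` is a
`gcd (nᵢ, nⱼ)`-th power, and `x = ∏ (uᵢ x)^{eᵢ} / ∏ uᵢ^{eᵢ} = a z^N` with `z = ∏ yᵢ^{cᵢ}`;
so `vₖ x` is an `mₖ`-th power as soon as `a vₖ` is one and `mₖ ∣ N`.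

Conversely, `uⱼ a = ∏ (uⱼ / uᵢ)^{eᵢ}` is an `nⱼ`-th power because `nⱼ ∣ gcd (nᵢ, nⱼ) · eᵢ`.
Take `x = a p^N` for a prime `p` at which every `a vₖ` is a `p`-adic unit. Then each `uⱼ x` is an
`nⱼ`-th power, and if `vₖ x = (a vₖ) p^N` is an `mₖ`-th power, comparing `p`-adic valuations
gives `mₖ ∣ N`, whence `a vₖ` itself is an `mₖ`-th power.
-/

open Filter

theorem Nat.dvd_gcd_mul_div {a b N : ℕ} (haN : a ∣ N) (hbN : b ∣ N) :
    b ∣ Nat.gcd a b * (N / a) := by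
  rcases a.eq_zero_or_pos with rfl | ha
  · simp [Nat.eq_zero_of_zero_dvd haN]
  obtain ⟨t, ht⟩ := Nat.lcm_dvd haN hbN
  refine ⟨t, Nat.eq_of_mul_eq_mul_left ha ?_⟩
  rw [← mul_assoc, mul_comm a, mul_assoc, Nat.mul_div_cancel' haN, ht, ← mul_assoc,
    Nat.gcd_mul_lcm, mul_assoc]

theorem exists_mul_pow_eq_pow_of_dvd {M : Type*} [CommMonoid M] {q : M} {m N : ℕ}
    (hq : ∃ w, q = w ^ m) (hmN : m ∣ N) (z : M) : ∃ y, q * z ^ N = y ^ m := by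
  obtain ⟨w, rfl⟩ := hq
  refine ⟨w * z ^ (N / m), ?_⟩
  rw [mul_pow, ← pow_mul, Nat.div_mul_cancel hmN]

section GroupWithZero

variable {G₀ : Type*} [CommGroupWithZero G₀]

theorem Finset.prod_zpow_eq_zpow_sum₀ {ι : Type*} {x : G₀} (hx : x ≠ 0) (s : Finset ι)
    (e : ι → ℤ) : ∏ i ∈ s, x ^ e i = x ^ ∑ i ∈ s, e i := by
  induction s using Finset.cons_induction with
  | empty => simp
  | cons i s hi ih => rw [Finset.prod_cons, Finset.sum_cons, ih, zpow_add₀ hx]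

theorem exists_mul_inv_eq_pow_gcd {a b x y z : G₀} {p q : ℕ} (hx : x ≠ 0)
    (ha : a * x = y ^ p) (hb : b * x = z ^ q) : ∃ w, a * b⁻¹ = w ^ Nat.gcd p q := by
  refine ⟨y ^ (p / p.gcd q) / z ^ (q / p.gcd q), ?_⟩
  rw [div_pow, ← pow_mul, ← pow_mul, Nat.div_mul_cancel (Nat.gcd_dvd_left p q),
    Nat.div_mul_cancel (Nat.gcd_dvd_right p q), ← ha, ← hb, mul_div_mul_right _ _ hx,
    div_eq_mul_inv]

theorem exists_zpow_eq_pow_of_dvd {a w : G₀} {g n : ℕ} {e : ℤ} (ha : a = w ^ g)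
    (hdvd : (n : ℤ) ∣ g * e) : ∃ z, a ^ e = z ^ n := by
  obtain ⟨s, hs⟩ := hdvd
  refine ⟨w ^ s, ?_⟩
  rw [ha, ← zpow_natCast, ← zpow_mul, hs, ← zpow_natCast, ← zpow_mul, mul_comm]

variable {ι : Type*} [Fintype ι] {u : ι → G₀} {n : ι → ℕ} {e : ι → ℤ}

theorem eq_prod_zpow_neg_mul_pow {y : ι → G₀} {c : ι → ℤ} {N : ℕ} {x : G₀}
    (hu : ∀ i, u i ≠ 0) (hx : x ≠ 0) (he : ∑ i, e i = 1)
    (hne : ∀ i, (n i : ℤ) * e i = c i * N) (hy : ∀ i, u i * x = y i ^ n i) :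
    x = (∏ i, u i ^ (-e i)) * (∏ i, y i ^ c i) ^ N := by
  have hfactor : ∀ i, u i ^ (-e i) * (y i ^ c i) ^ N = x ^ e i := fun i => by
    rw [← zpow_natCast, ← zpow_mul, ← hne, zpow_mul, zpow_natCast, ← hy, mul_zpow,
      zpow_neg, inv_mul_cancel_left₀ (zpow_ne_zero _ (hu i))]
  rw [← Finset.prod_pow, ← Finset.prod_mul_distrib, Finset.prod_congr rfl fun i _ => hfactor i,
    Finset.prod_zpow_eq_zpow_sum₀ hx, he, zpow_one]

theorem exists_mul_prod_zpow_neg_eq_pow (hu : ∀ i, u i ≠ 0) (he : ∑ i, e i = 1)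
    (hpow : ∀ i j, i ≠ j → ∃ t, u i * (u j)⁻¹ = t ^ Nat.gcd (n i) (n j))
    (hdvd : ∀ i j, (n j : ℤ) ∣ Nat.gcd (n i) (n j) * e i) (j : ι) :
    ∃ Y, u j * ∏ i, u i ^ (-e i) = Y ^ n j := by
  have hprod : u j * ∏ i, u i ^ (-e i) = ∏ i, (u i * (u j)⁻¹) ^ (-e i) := by
    simp_rw [mul_zpow, Finset.prod_mul_distrib, inv_zpow', neg_neg,
      Finset.prod_zpow_eq_zpow_sum₀ (hu j), he, zpow_one, mul_comm]
  have hfactor : ∀ i, ∃ Y, (u i * (u j)⁻¹) ^ (-e i) = Y ^ n j := fun i => by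
    by_cases hij : i = j
    · exact ⟨1, by rw [hij, mul_inv_cancel₀ (hu j), one_zpow, one_pow]⟩
    obtain ⟨t, ht⟩ := hpow i j hij
    exact exists_zpow_eq_pow_of_dvd ht (by simpa only [mul_neg, dvd_neg] using hdvd i j)
  choose Y hY using hfactor
  refine ⟨∏ i, Y i, ?_⟩
  rw [hprod, ← Finset.prod_pow]
  exact Finset.prod_congr rfl fun i _ => hY i

end GroupWithZero

theorem padicValNat_eq_zero_of_lt {p n : ℕ} (h : n < p) : padicValNat p n = 0 := by
  rcases n.eq_zero_or_pos with rfl | hn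
  · exact padicValNat_zero_right p
  · exact padicValNat_eq_zero_of_mem_Ioo (k := 0) ⟨by simpa using hn, by simpa using h⟩

theorem eventually_padicValRat_eq_zero (q : ℚ) : ∀ᶠ p in atTop, padicValRat p q = 0 := by
  filter_upwards [eventually_gt_atTop q.num.natAbs, eventually_gt_atTop q.den] with p hnum hden
  rw [padicValRat, padicValInt, padicValNat_eq_zero_of_lt hnum, padicValNat_eq_zero_of_lt hden,
    Nat.cast_zero, sub_zero]

theorem exists_prime_forall_padicValRat_eq_zero {ι : Type*} [Finite ι] (q : ι → ℚ) :
    ∃ p, p.Prime ∧ ∀ k, padicValRat p (q k) = 0 :=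
  ((Nat.frequently_atTop_iff_infinite.2 Nat.infinite_setOfPred_prime).and_eventually
    (eventually_all.2 fun k => eventually_padicValRat_eq_zero (q k))).exists

theorem dvd_of_mul_pow_eq_pow {p : ℕ} [Fact p.Prime] {q w : ℚ} {m N : ℕ} (hq : q ≠ 0)
    (hval : padicValRat p q = 0) (h : q * (p : ℚ) ^ N = w ^ m) : m ∣ N := by
  have hp : (p : ℚ) ≠ 0 := Nat.cast_ne_zero.2 (Fact.out : p.Prime).ne_zero
  apply_fun padicValRat p at h
  rw [padicValRat.mul hq (pow_ne_zero N hp), padicValRat.pow, padicValRat.pow, hval,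
    padicValRat.self (Fact.out : p.Prime).one_lt, zero_add, mul_one] at h
  exact Int.natCast_dvd_natCast.1 ⟨_, h⟩

theorem second_QE_for_roots_general (ℓ l : ℕ) (u : Fin ℓ → ℚ)
    (hu : ∀ i, 0 < u i) (n : Fin ℓ → ℕ)
    (v : Fin l → ℚ) (hv : ∀ k, 0 < v k) (m : Fin l → ℕ)
    (c : Fin ℓ → ℤ)
    (hc : ∑ i, c i * ((Finset.univ.lcm n / n i : ℕ) : ℤ) = 1) :
    (∃ x : ℚ, 0 < x ∧ (∀ j, ∃ y : ℚ, u j * x = y ^ n j) ∧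
        ∀ k, ¬ ∃ y : ℚ, v k * x = y ^ m k) ↔
      ((∀ i j : Fin ℓ, i ≠ j → ∃ y : ℚ, u i * (u j)⁻¹ = y ^ Nat.gcd (n i) (n j)) ∧
        ∀ k, m k ∣ Finset.univ.lcm n →
          ¬ ∃ y : ℚ,
            (∏ i, u i ^ (-(c i * ((Finset.univ.lcm n / n i : ℕ) : ℤ)))) * v k
              = y ^ m k) := by
  set N := Finset.univ.lcm n
  have hnN : ∀ i, n i ∣ N := fun i => Finset.dvd_lcm (Finset.mem_univ i)
  have hne : ∀ i, (n i : ℤ) * (c i * ((N / n i : ℕ) : ℤ)) = c i * N := fun i => by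
    rw [mul_left_comm, ← Nat.cast_mul, Nat.mul_div_cancel' (hnN i)]
  have hu0 : ∀ i, u i ≠ 0 := fun i => (hu i).ne'
  set a := ∏ i, u i ^ (-(c i * ((N / n i : ℕ) : ℤ)))
  constructor
  · rintro ⟨x, hx, hroot, hnot⟩
    choose y hy using hroot
    refine ⟨fun i j _ => exists_mul_inv_eq_pow_gcd hx.ne' (hy i) (hy j),
      fun k hk hpow => hnot k ?_⟩
    rw [eq_prod_zpow_neg_mul_pow hu0 hx.ne' hc hne hy, mul_left_comm, ← mul_assoc]
    exact exists_mul_pow_eq_pow_of_dvd hpow hk _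
  · rintro ⟨hgcd, hnot⟩
    obtain ⟨p, hp, hval⟩ := exists_prime_forall_padicValRat_eq_zero fun k => a * v k
    have : Fact p.Prime := ⟨hp⟩
    have ha : 0 < a := Finset.prod_pos fun i _ => zpow_pos (hu i) _
    have hdvd : ∀ i j, (n j : ℤ) ∣ Nat.gcd (n i) (n j) * (c i * ((N / n i : ℕ) : ℤ)) :=
      fun i j => by
        rw [mul_left_comm]
        exact_mod_cast
          (Int.natCast_dvd_natCast.2 (Nat.dvd_gcd_mul_div (hnN i) (hnN j))).mul_left _
    refine ⟨a * (p : ℚ) ^ N, mul_pos ha (pow_pos (Nat.cast_pos.2 hp.pos) N),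
      fun j => ?_, fun k hpow => ?_⟩
    · rw [← mul_assoc]
      exact exists_mul_pow_eq_pow_of_dvd
        (exists_mul_prod_zpow_neg_eq_pow hu0 hc hgcd hdvd j) (hnN j) _
    · have hvx : v k * (a * (p : ℚ) ^ N) = a * v k * (p : ℚ) ^ N := by ring
      rw [hvx] at hpow
      obtain ⟨w, hw⟩ := hpow
      have hk : m k ∣ N := dvd_of_mul_pow_eq_pow (mul_pos ha (hv k)).ne' (hval k) hw
      refine hnot k hk ?_
      have hp0 : (p : ℚ) ≠ 0 := Nat.cast_ne_zero.2 hp.ne_zero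
      simpa only [mul_assoc, ← mul_pow, mul_inv_cancel₀ hp0, one_pow, mul_one]
        using exists_mul_pow_eq_pow_of_dvd ⟨w, hw⟩ hk (p : ℚ)⁻¹

/-- **Second quantifier elimination for `n`-th power predicates.**
With `u j` positive rationals, `n j` positive integers, `N = lcm (n j)`,
`∑ i, c i * (N / n i) = 1` and `a = ∏ i, (u i) ^ (-(c i * (N / n i)))`, and with `v k`
positive rationals and `m k` positive integers: there exists a positive rational `x` such
that each `u j * x` is an `n j`-th power and no `v k * x` is an `m k`-th power, if and only
if each `u i * (u j)⁻¹` (for `i ≠ j`) is a `gcd (n i) (n j)`-th power and for every `k`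
with `m k ∣ N` the number `a * v k` is not an `m k`-th power. -/
theorem second_QE_for_roots (ℓ l : ℕ) (hℓ : 1 ≤ ℓ) (u : Fin ℓ → ℚ)
    (hu : ∀ i, 0 < u i) (n : Fin ℓ → ℕ) (hn : ∀ i, 0 < n i)
    (v : Fin l → ℚ) (hv : ∀ k, 0 < v k) (m : Fin l → ℕ) (hm : ∀ k, 0 < m k)
    (c : Fin ℓ → ℤ)
    (hc : ∑ i, c i * ((Finset.univ.lcm n / n i : ℕ) : ℤ) = 1) :
    (∃ x : ℚ, 0 < x ∧ (∀ j, ∃ y : ℚ, u j * x = y ^ n j) ∧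
        ∀ k, ¬ ∃ y : ℚ, v k * x = y ^ m k) ↔
      ((∀ i j : Fin ℓ, i ≠ j → ∃ y : ℚ, u i * (u j)⁻¹ = y ^ Nat.gcd (n i) (n j)) ∧
        ∀ k, m k ∣ Finset.univ.lcm n →
          ¬ ∃ y : ℚ,
            (∏ i, u i ^ (-(c i * ((Finset.univ.lcm n / n i : ℕ) : ℤ)))) * v k
              = y ^ m k) :=
  second_QE_for_roots_general ℓ l u hu n v hv m c hc
end

section
/- Quantifier elimination for the multiplicative reals with positivity: let L be the first-order language with one binary function symbol (multiplication), one unary function symbol (inverse), constant symbols 0, 1, −1, and one unary relation symbol P. Make ℝ an L-structure by interpreting multiplication as real multiplication, inverse as x ↦ x^{−1} with 0^{−1} = 0, the constants as 0, 1, −1, and P(x) as 'x > 0'. Then this structure admits quantifier elimination: for every L-formula φ(x_1, …, x_k) there is a quantifier-free L-formula ψ(x_1, …, x_k) satisfied by exactly the same tuples of real numbers as φ. -/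
open FirstOrder Language

/-- Function symbols of the language `L`: constants `0`, `1`, `−1`, a unary inverse, and
a binary multiplication. -/
inductive RealMulFunc : ℕ → Type
  | zero : RealMulFunc 0
  | one : RealMulFunc 0
  | negOne : RealMulFunc 0
  | inv : RealMulFunc 1
  | mul : RealMulFunc 2

/-- Relation symbols of `L`: a single unary positivity predicate `P`. -/
inductive PosRel : ℕ → Type
  | pos : PosRel 1

/-- The language `{×, ⁻¹, 0, 1, −1, P}`. -/
def LmulPos : Language := ⟨RealMulFunc, PosRel⟩

/-- `ℝ` as an `LmulPos`-structure: multiplication is real multiplication, inverse is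
`x ↦ x⁻¹` (with `0⁻¹ = 0`), the constants are `0`, `1`, `−1`, and `P(x)` means `x > 0`. -/
noncomputable instance : LmulPos.Structure ℝ where
  funMap
    | .zero => fun _ => 0
    | .one => fun _ => 1
    | .negOne => fun _ => -1
    | .inv => fun v => (v 0)⁻¹
    | .mul => fun v => v 0 * v 1
  RelMap
    | .pos => fun v => 0 < v 0

/-!
Every term is homogeneous in the last variable `y`: for `r ≠ 0`, replacing `y` by `r * y`
multiplies its value by `r ^ d` for some `d ∈ ℤ`. Writing `y = r * z` with `r > 0` and
`z ∈ {0, 1, -1}`, a quantifier-free formula in `y` becomes a Boolean combination of `y`-free atoms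
and equations `r ^ c * A = B` in `r`. Such an equation with `c ≠ 0` and `A ≠ 0` has at most one
positive root, and at every other `r > 0` each equation has a truth value independent of `r`. So
`∃ r > 0` holds iff the formula holds at a generic `r` or at one of these finitely many roots; at
the root of `r ^ c * A = B`, any other equation `r ^ c' * A' = B'` is decided without knowing the
root by raising it to the power `c`.
-/

namespace FirstOrder.Language

namespace Term

variable {L : Language} {α : Type*} {n : ℕ}

def substLast (t : L.Term (α ⊕ Fin (n + 1))) (z : L.Term (α ⊕ Fin n)) : L.Term (α ⊕ Fin n) :=
  t.subst (Sum.elim (var ∘ Sum.inl) (Fin.snoc (var ∘ Sum.inr) z))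

@[simp]
theorem realize_substLast {M : Type*} [L.Structure M] (t : L.Term (α ⊕ Fin (n + 1)))
    (z : L.Term (α ⊕ Fin n)) (v : α → M) (xs : Fin n → M) :
    (t.substLast z).realize (Sum.elim v xs) =
      t.realize (Sum.elim v (Fin.snoc xs (z.realize (Sum.elim v xs)))) := by
  rw [substLast, realize_subst]
  congr 1
  ext (a | i)
  · rfl
  · rw [Sum.elim_inr, Sum.elim_inr, ← Function.comp_apply (f := realize _), Fin.comp_snoc]
    rfl

end Term

namespace BoundedFormula

variable {L L' : Language} {α β : Type*} {k m : ℕ}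

def mapAtoms (fe : L.Term (α ⊕ Fin k) → L.Term (α ⊕ Fin k) → L'.BoundedFormula β m)
    (fr : ∀ {l}, L.Relations l → (Fin l → L.Term (α ⊕ Fin k)) → L'.BoundedFormula β m) :
    L.BoundedFormula α k → L'.BoundedFormula β m
  | falsum => falsum
  | equal t₁ t₂ => fe t₁ t₂
  | rel R ts => fr R ts
  | imp φ ψ => (mapAtoms fe fr φ).imp (mapAtoms fe fr ψ)
  | all _ => falsum

def equalities : L.BoundedFormula α k → List (L.Term (α ⊕ Fin k) × L.Term (α ⊕ Fin k))
  | equal t₁ t₂ => [(t₁, t₂)]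
  | imp φ ψ => equalities φ ++ equalities ψ
  | _ => []

variable {fe : L.Term (α ⊕ Fin k) → L.Term (α ⊕ Fin k) → L'.BoundedFormula β m}
  {fr : ∀ {l}, L.Relations l → (Fin l → L.Term (α ⊕ Fin k)) → L'.BoundedFormula β m}

theorem isQF_mapAtoms (he : ∀ t₁ t₂, (fe t₁ t₂).IsQF)
    (hr : ∀ {l} (R : L.Relations l) ts, (fr R ts).IsQF) (φ : L.BoundedFormula α k) :
    (φ.mapAtoms fe fr).IsQF :=
  match φ with
  | falsum => IsQF.falsum
  | equal t₁ t₂ => he t₁ t₂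
  | rel R ts => hr R ts
  | imp φ ψ => (isQF_mapAtoms he hr φ).imp (isQF_mapAtoms he hr ψ)
  | all _ => IsQF.falsum

theorem realize_mapAtoms {M N : Type*} [L.Structure M] [L'.Structure N]
    {φ : L.BoundedFormula α k} (hφ : φ.IsQF) {v : α → M} {xs : Fin k → M} {w : β → N}
    {ys : Fin m → N}
    (he : ∀ p ∈ φ.equalities, (fe p.1 p.2).Realize w ys ↔
      p.1.realize (Sum.elim v xs) = p.2.realize (Sum.elim v xs))
    (hr : ∀ {l} (R : L.Relations l) ts, (fr R ts).Realize w ys ↔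
      Structure.RelMap R fun i => (ts i).realize (Sum.elim v xs)) :
    (φ.mapAtoms fe fr).Realize w ys ↔ φ.Realize v xs := by
  induction hφ with
  | falsum => exact Iff.rfl
  | of_isAtomic h =>
    cases h with
    | equal t₁ t₂ => exact he (t₁, t₂) (List.mem_singleton_self _)
    | rel R ts => exact hr R ts
  | imp _ _ ih₁ ih₂ =>
    simp only [equalities, List.mem_append] at he
    exact imp_congr (ih₁ fun p hp => he p (.inl hp)) (ih₂ fun p hp => he p (.inr hp))

theorem isQF_foldr_sup {l : List (L.BoundedFormula α k)} (h : ∀ φ ∈ l, φ.IsQF) :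
    (l.foldr (· ⊔ ·) ⊥).IsQF := by
  induction l with
  | nil => exact isQF_bot
  | cons φ l ih =>
    exact (h φ List.mem_cons_self).sup (ih fun ψ hψ => h ψ (List.mem_cons_of_mem φ hψ))

end BoundedFormula

end FirstOrder.Language

section ZPow

variable {r u a b a' b' : ℝ} {c c' : ℤ}

theorem zpow_mul_eq_iff_of_not_root (h : c = 0 ∨ a = 0 ∨ r ^ c * a ≠ b) :
    r ^ c * a = b ↔ a = b ∧ (c = 0 ∨ a = 0) := by
  rcases h with rfl | rfl | h
  · simp
  · simp [eq_comm]
  · refine iff_of_false h ?_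
    rintro ⟨rfl, rfl | rfl⟩ <;> simp at h

theorem zpow_left_inj_of_mul_pos (hub : 0 < u * b) (hc : c ≠ 0) : u ^ c = b ^ c ↔ u = b := by
  refine ⟨fun h => ?_, fun h => h ▸ rfl⟩
  have habs : |u| = |b| := by
    rw [← zpow_left_inj₀ (abs_nonneg u) (abs_nonneg b) hc, ← abs_zpow, ← abs_zpow, h]
  rcases abs_eq_abs.1 habs with h | h
  · exact h
  · nlinarith

theorem mul_pos_of_zpow_mul_eq (hr : 0 < r) (ha : a ≠ 0) (h : r ^ c * a = b) : 0 < a * b := by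
  rw [← h, mul_left_comm]
  exact mul_pos (zpow_pos hr c) (mul_self_pos.2 ha)

theorem exists_pos_zpow_mul_eq (hc : c ≠ 0) (hab : 0 < a * b) : ∃ r > 0, r ^ c * a = b := by
  have ha : a ≠ 0 := left_ne_zero_of_mul hab.ne'
  have hba : 0 < b / a := by
    simpa [mul_div_mul_left b a ha] using div_pos hab (mul_self_pos.2 ha)
  refine ⟨(b / a) ^ (c : ℝ)⁻¹, Real.rpow_pos_of_pos hba _, ?_⟩
  rw [← Real.rpow_intCast, Real.rpow_inv_rpow hba.le (Int.cast_ne_zero.2 hc), div_mul_cancel₀ b ha]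

theorem subsingleton_pos_zpow_mul_eq (hc : c ≠ 0) (ha : a ≠ 0) :
    {r : ℝ | 0 < r ∧ r ^ c * a = b}.Subsingleton := by
  rintro r ⟨hr, hrb⟩ s ⟨hs, hsb⟩
  rw [← zpow_left_inj₀ hr.le hs.le hc]
  exact mul_right_cancel₀ ha (hrb.trans hsb.symm)

theorem zpow_mul_eq_iff_of_root (hr : 0 < r) (hc : c ≠ 0) (ha : a ≠ 0) (hb : r ^ c * a = b) :
    r ^ c' * a' = b' ↔
      (a' = 0 ∧ b' = 0) ∨ (0 < a' * b' ∧ b ^ c' * a' ^ c = b' ^ c * a ^ c') := by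
  have hrc' : 0 < r ^ c' := zpow_pos hr c'
  have hpow : b ^ c' * a' ^ c = (r ^ c' * a') ^ c * a ^ c' := by
    rw [← hb, mul_zpow, mul_zpow, ← zpow_mul, ← zpow_mul, mul_comm c]
    ring
  have hsign : 0 < a' * b' ↔ 0 < r ^ c' * a' * b' := by
    rw [mul_assoc, mul_pos_iff_of_pos_left hrc']
  rw [hpow, mul_left_inj' (zpow_ne_zero _ ha), hsign]
  constructor
  · rintro rfl
    by_cases ha' : a' = 0
    · simp [ha']
    · exact .inr ⟨mul_self_pos.2 (mul_ne_zero hrc'.ne' ha'), rfl⟩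
  · rintro (⟨rfl, rfl⟩ | ⟨hpos, h⟩)
    · simp
    · exact (zpow_left_inj_of_mul_pos hpos hc).1 h

theorem exists_iff_exists_sign_pos_mul {p : ℝ → Prop} :
    (∃ y, p y) ↔ ∃ w ∈ [0, 1, -1], ∃ r > 0, p (r * w) := by
  refine ⟨fun ⟨y, hy⟩ => ?_, fun ⟨w, _, r, _, h⟩ => ⟨_, h⟩⟩
  rcases lt_trichotomy y 0 with h | rfl | h
  · exact ⟨-1, by simp, -y, by linarith, by simpa using hy⟩
  · exact ⟨0, by simp, 1, one_pos, by simpa using hy⟩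
  · exact ⟨1, by simp, y, h, by simpa using hy⟩

end ZPow

namespace LmulPos

open Term BoundedFormula

variable {γ β : Type*} {n : ℕ}

section Terms

instance : Zero (LmulPos.Term γ) := ⟨func RealMulFunc.zero ![]⟩
instance : One (LmulPos.Term γ) := ⟨func RealMulFunc.one ![]⟩
instance : Mul (LmulPos.Term γ) := ⟨fun t₁ t₂ => func RealMulFunc.mul ![t₁, t₂]⟩
instance : Inv (LmulPos.Term γ) := ⟨fun t => func RealMulFunc.inv ![t]⟩

def negOne : LmulPos.Term γ := func RealMulFunc.negOne ![]

def npow (t : LmulPos.Term γ) : ℕ → LmulPos.Term γ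
  | 0 => 1
  | k + 1 => npow t k * t

instance : Pow (LmulPos.Term γ) ℤ :=
  ⟨fun t c => match c with
    | .ofNat k => npow t k
    | .negSucc k => npow t⁻¹ (k + 1)⟩

variable (e : γ → ℝ) (t t₁ t₂ : LmulPos.Term γ)

@[simp] theorem realize_zero : (0 : LmulPos.Term γ).realize e = 0 := rfl
@[simp] theorem realize_one : (1 : LmulPos.Term γ).realize e = 1 := rfl
@[simp] theorem realize_negOne : (negOne : LmulPos.Term γ).realize e = -1 := rfl
@[simp] theorem realize_mul : (t₁ * t₂).realize e = t₁.realize e * t₂.realize e := rfl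
@[simp] theorem realize_inv : t⁻¹.realize e = (t.realize e)⁻¹ := rfl

@[simp]
theorem realize_npow (k : ℕ) : (npow t k).realize e = t.realize e ^ k := by
  induction k with
  | zero => rfl
  | succ k ih => rw [npow, realize_mul, ih, pow_succ]

@[simp]
theorem realize_zpow (c : ℤ) : (t ^ c).realize e = t.realize e ^ c := by
  cases c with
  | ofNat k => exact realize_npow e t k
  | negSucc k => exact (realize_npow e t⁻¹ (k + 1)).trans (by simp [zpow_negSucc, inv_pow])

def lastDegree : LmulPos.Term (β ⊕ Fin (n + 1)) → ℤ
  | var (Sum.inl _) => 0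
  | var (Sum.inr i) => if i = Fin.last n then 1 else 0
  | func RealMulFunc.inv ts => -lastDegree (ts 0)
  | func RealMulFunc.mul ts => lastDegree (ts 0) + lastDegree (ts 1)
  | func RealMulFunc.zero _ | func RealMulFunc.one _ | func RealMulFunc.negOne _ => 0

theorem realize_snoc_mul {v : β → ℝ} {xs : Fin n → ℝ} {r : ℝ} (hr : r ≠ 0) (y : ℝ) :
    ∀ t : LmulPos.Term (β ⊕ Fin (n + 1)), t.realize (Sum.elim v (Fin.snoc xs (r * y))) =
      r ^ lastDegree t * t.realize (Sum.elim v (Fin.snoc xs y))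
  | var (Sum.inl _) => by simp [lastDegree]
  | var (Sum.inr i) => by
    refine Fin.lastCases ?_ (fun j => ?_) i <;> simp [lastDegree, Fin.snoc_castSucc]
  | func RealMulFunc.inv ts => by
    change (realize _ (ts 0))⁻¹ = _ * (realize _ (ts 0))⁻¹
    rw [realize_snoc_mul hr y (ts 0), lastDegree, mul_inv, zpow_neg]
  | func RealMulFunc.mul ts => by
    change realize _ (ts 0) * realize _ (ts 1) = _ * (realize _ (ts 0) * realize _ (ts 1))
    rw [realize_snoc_mul hr y (ts 0), realize_snoc_mul hr y (ts 1), lastDegree, zpow_add₀ hr]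
    ring
  | func RealMulFunc.zero _ | func RealMulFunc.one _ | func RealMulFunc.negOne _ => by
    rw [lastDegree, zpow_zero, one_mul]
    rfl

end Terms

def pos (t : LmulPos.Term (β ⊕ Fin n)) : LmulPos.BoundedFormula β n :=
  Relations.boundedFormula₁ PosRel.pos t

@[simp]
theorem realize_pos {t : LmulPos.Term (β ⊕ Fin n)} {v : β → ℝ} {xs : Fin n → ℝ} :
    (pos t).Realize v xs ↔ 0 < t.realize (Sum.elim v xs) :=
  realize_rel₁

structure PowEquation (γ : Type*) where
  exp : ℤ
  lhs : LmulPos.Term γ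
  rhs : LmulPos.Term γ

namespace PowEquation

def Holds (E : PowEquation γ) (e : γ → ℝ) (r : ℝ) : Prop :=
  r ^ E.exp * E.lhs.realize e = E.rhs.realize e

def IsIsolatedRoot (E : PowEquation γ) (e : γ → ℝ) (r : ℝ) : Prop :=
  E.exp ≠ 0 ∧ E.lhs.realize e ≠ 0 ∧ E.Holds e r

theorem subsingleton_isIsolatedRoot (E : PowEquation γ) (e : γ → ℝ) :
    {r : ℝ | 0 < r ∧ E.IsIsolatedRoot e r}.Subsingleton := by
  rintro r ⟨hr, hc, ha, h⟩ s ⟨hs, -, -, h'⟩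
  exact subsingleton_pos_zpow_mul_eq hc ha ⟨hr, h⟩ ⟨hs, h'⟩

theorem finite_isIsolatedRoot (l : List (PowEquation γ)) (e : γ → ℝ) :
    {r : ℝ | 0 < r ∧ ∃ E ∈ l, E.IsIsolatedRoot e r}.Finite := by
  refine (l.finite_toSet.biUnion fun E _ => (E.subsingleton_isIsolatedRoot e).finite).subset ?_
  rintro r ⟨hr, E, hE, hroot⟩
  exact Set.mem_biUnion hE ⟨hr, hroot⟩

variable (E E' : PowEquation (β ⊕ Fin n)) {v : β → ℝ} {xs : Fin n → ℝ}

def genericFormula : LmulPos.BoundedFormula β n :=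
  if E.exp = 0 then E.lhs =' E.rhs else E.lhs =' 0 ⊓ E.rhs =' 0

def existsIsolatedRootFormula : LmulPos.BoundedFormula β n :=
  if E.exp = 0 then ⊥ else pos (E.lhs * E.rhs)

/-- Raising `r₀ ^ c' * A' = B'` to the power `c` and using `r₀ ^ c = B / A` eliminates the root
`r₀`; the sign condition recovers the equation from its `c`-th power. -/
def atRootFormula : LmulPos.BoundedFormula β n :=
  E'.lhs =' 0 ⊓ E'.rhs =' 0 ⊔
    pos (E'.lhs * E'.rhs) ⊓
      (E.rhs ^ E'.exp * E'.lhs ^ E.exp) =' (E'.rhs ^ E.exp * E.lhs ^ E'.exp)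

theorem isQF_genericFormula : E.genericFormula.IsQF := by
  unfold genericFormula
  split_ifs
  exacts [(IsAtomic.equal _ _).isQF, (IsAtomic.equal _ _).isQF.inf (IsAtomic.equal _ _).isQF]

theorem isQF_existsIsolatedRootFormula : E.existsIsolatedRootFormula.IsQF := by
  unfold existsIsolatedRootFormula
  split_ifs
  exacts [isQF_bot, (IsAtomic.rel _ _).isQF]

theorem isQF_atRootFormula : (E.atRootFormula E').IsQF :=
  ((IsAtomic.equal _ _).isQF.inf (IsAtomic.equal _ _).isQF).sup
    ((IsAtomic.rel _ _).isQF.inf (IsAtomic.equal _ _).isQF)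

variable {E} {r : ℝ}

theorem realize_genericFormula (h : ¬E.IsIsolatedRoot (Sum.elim v xs) r) :
    E.genericFormula.Realize v xs ↔ E.Holds (Sum.elim v xs) r := by
  rw [Holds, zpow_mul_eq_iff_of_not_root (by unfold IsIsolatedRoot Holds at h; tauto),
    genericFormula]
  split_ifs with hc <;> simp [hc]
  grind

theorem realize_existsIsolatedRootFormula :
    E.existsIsolatedRootFormula.Realize v xs ↔ ∃ r > 0, E.IsIsolatedRoot (Sum.elim v xs) r := by
  unfold existsIsolatedRootFormula
  split_ifs with hc
  · simp [IsIsolatedRoot, hc]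
  · rw [realize_pos, realize_mul]
    refine ⟨fun hab => ?_, fun ⟨r, hr, _, ha, h⟩ => mul_pos_of_zpow_mul_eq hr ha h⟩
    obtain ⟨r, hr, h⟩ := exists_pos_zpow_mul_eq hc hab
    exact ⟨r, hr, hc, left_ne_zero_of_mul hab.ne', h⟩

theorem realize_atRootFormula (hr : 0 < r) (hroot : E.IsIsolatedRoot (Sum.elim v xs) r) :
    (E.atRootFormula E').Realize v xs ↔ E'.Holds (Sum.elim v xs) r := by
  rw [Holds, zpow_mul_eq_iff_of_root hr hroot.1 hroot.2.1 hroot.2.2]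
  simp [atRootFormula]

end PowEquation

section ExistsPos

variable (z : LmulPos.Term (β ⊕ Fin n)) (θ : LmulPos.BoundedFormula β (n + 1))

def scaledEquation (t₁ t₂ : LmulPos.Term (β ⊕ Fin (n + 1))) : PowEquation (β ⊕ Fin n) :=
  ⟨lastDegree t₁ - lastDegree t₂, t₁.substLast z, t₂.substLast z⟩

def scaledEquations : List (PowEquation (β ⊕ Fin n)) :=
  θ.equalities.map fun p => scaledEquation z p.1 p.2

def substLastRel {l : ℕ} (R : LmulPos.Relations l)
    (ts : Fin l → LmulPos.Term (β ⊕ Fin (n + 1))) : LmulPos.BoundedFormula β n :=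
  R.boundedFormula fun i => (ts i).substLast z

def genericPart : LmulPos.BoundedFormula β n :=
  θ.mapAtoms (fun t₁ t₂ => (scaledEquation z t₁ t₂).genericFormula) (substLastRel z)

def rootPart (E : PowEquation (β ⊕ Fin n)) : LmulPos.BoundedFormula β n :=
  E.existsIsolatedRootFormula ⊓
    θ.mapAtoms (fun t₁ t₂ => E.atRootFormula (scaledEquation z t₁ t₂)) (substLastRel z)

def existsPosMul : LmulPos.BoundedFormula β n :=
  genericPart z θ ⊔ ((scaledEquations z θ).map (rootPart z θ)).foldr (· ⊔ ·) ⊥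

theorem isQF_existsPosMul : (existsPosMul z θ).IsQF := by
  refine (isQF_mapAtoms (fun _ _ => PowEquation.isQF_genericFormula _)
    (fun _ _ => (IsAtomic.rel _ _).isQF) θ).sup (isQF_foldr_sup ?_)
  simp only [List.mem_map]
  rintro _ ⟨E, -, rfl⟩
  exact E.isQF_existsIsolatedRootFormula.inf (isQF_mapAtoms
    (fun _ _ => E.isQF_atRootFormula _) (fun _ _ => (IsAtomic.rel _ _).isQF) θ)

variable {z θ} {v : β → ℝ} {xs : Fin n → ℝ} {r : ℝ}

theorem realize_snoc_mul_eq_iff (hr : r ≠ 0) (t₁ t₂ : LmulPos.Term (β ⊕ Fin (n + 1))) :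
    t₁.realize (Sum.elim v (Fin.snoc xs (r * z.realize (Sum.elim v xs)))) =
        t₂.realize (Sum.elim v (Fin.snoc xs (r * z.realize (Sum.elim v xs)))) ↔
      (scaledEquation z t₁ t₂).Holds (Sum.elim v xs) r := by
  rw [realize_snoc_mul hr, realize_snoc_mul hr, PowEquation.Holds, scaledEquation,
    realize_substLast, realize_substLast, zpow_sub₀ hr, div_mul_eq_mul_div,
    div_eq_iff (zpow_ne_zero _ hr), mul_comm _ (r ^ _)]

theorem realize_substLastRel (hr : 0 < r) {l : ℕ} (R : LmulPos.Relations l)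
    (ts : Fin l → LmulPos.Term (β ⊕ Fin (n + 1))) :
    (substLastRel z R ts).Realize v xs ↔ Structure.RelMap R
      fun i => (ts i).realize (Sum.elim v (Fin.snoc xs (r * z.realize (Sum.elim v xs)))) := by
  cases R
  change 0 < ((ts 0).substLast z).realize _ ↔ 0 < (ts 0).realize _
  rw [realize_snoc_mul hr.ne', realize_substLast, mul_pos_iff_of_pos_left (zpow_pos hr _)]

theorem realize_genericPart (hθ : θ.IsQF) (hr : 0 < r)
    (hgen : ∀ E ∈ scaledEquations z θ, ¬E.IsIsolatedRoot (Sum.elim v xs) r) :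
    (genericPart z θ).Realize v xs ↔
      θ.Realize v (Fin.snoc xs (r * z.realize (Sum.elim v xs))) :=
  realize_mapAtoms hθ
    (fun _ hp => (PowEquation.realize_genericFormula (hgen _ (List.mem_map_of_mem hp))).trans
      (realize_snoc_mul_eq_iff hr.ne' _ _).symm)
    (realize_substLastRel hr)

theorem realize_rootPart (hθ : θ.IsQF) (hr : 0 < r) {E : PowEquation (β ⊕ Fin n)}
    (hroot : E.IsIsolatedRoot (Sum.elim v xs) r) :
    (rootPart z θ E).Realize v xs ↔
      θ.Realize v (Fin.snoc xs (r * z.realize (Sum.elim v xs))) := by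
  rw [rootPart, realize_inf, PowEquation.realize_existsIsolatedRootFormula,
    and_iff_right ⟨r, hr, hroot⟩]
  exact realize_mapAtoms hθ
    (fun _ _ => (E.realize_atRootFormula _ hr hroot).trans
      (realize_snoc_mul_eq_iff hr.ne' _ _).symm)
    (realize_substLastRel hr)

theorem realize_existsPosMul (hθ : θ.IsQF) :
    (existsPosMul z θ).Realize v xs ↔
      ∃ r > 0, θ.Realize v (Fin.snoc xs (r * z.realize (Sum.elim v xs))) := by
  simp only [existsPosMul, realize_sup, realize_foldr_sup, List.mem_map, exists_exists_and_eq_and]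
  constructor
  · rintro (h | ⟨E, -, h⟩)
    · obtain ⟨r, hr, hgen⟩ := ((Set.Ioi_infinite 0).sdiff
        (PowEquation.finite_isIsolatedRoot (scaledEquations z θ) (Sum.elim v xs))).nonempty
      exact ⟨r, hr, (realize_genericPart hθ hr fun E hE h' => hgen ⟨hr, E, hE, h'⟩).1 h⟩
    · obtain ⟨r, hr, hroot⟩ :=
        PowEquation.realize_existsIsolatedRootFormula.1 (realize_inf.1 h).1
      exact ⟨r, hr, (realize_rootPart hθ hr hroot).1 h⟩
  · rintro ⟨r, hr, h⟩
    by_cases hroot : ∃ E ∈ scaledEquations z θ, E.IsIsolatedRoot (Sum.elim v xs) r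
    · obtain ⟨E, hE, hroot⟩ := hroot
      exact .inr ⟨E, hE, (realize_rootPart hθ hr hroot).2 h⟩
    · exact .inl ((realize_genericPart hθ hr fun E hE h' => hroot ⟨E, hE, h'⟩).2 h)

end ExistsPos

def existsLast (θ : LmulPos.BoundedFormula β (n + 1)) : LmulPos.BoundedFormula β n :=
  ([0, 1, negOne].map fun z => existsPosMul z θ).foldr (· ⊔ ·) ⊥

theorem isQF_existsLast (θ : LmulPos.BoundedFormula β (n + 1)) : (existsLast θ).IsQF :=
  isQF_foldr_sup <| by
    simpa using ⟨isQF_existsPosMul _ θ, isQF_existsPosMul _ θ, isQF_existsPosMul _ θ⟩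

theorem realize_existsLast {θ : LmulPos.BoundedFormula β (n + 1)} (hθ : θ.IsQF) {v : β → ℝ}
    {xs : Fin n → ℝ} : (existsLast θ).Realize v xs ↔ ∃ y, θ.Realize v (Fin.snoc xs y) := by
  rw [exists_iff_exists_sign_pos_mul, existsLast, realize_foldr_sup]
  simp only [List.mem_map, exists_exists_and_eq_and, realize_existsPosMul hθ]
  simp only [List.mem_cons, List.not_mem_nil, or_false, exists_eq_or_imp, exists_eq_left,
    realize_zero, realize_one, realize_negOne]

theorem exists_isQF_realize_iff (φ : LmulPos.BoundedFormula β n) :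
    ∃ ψ : LmulPos.BoundedFormula β n, ψ.IsQF ∧
      ∀ (v : β → ℝ) (xs : Fin n → ℝ), φ.Realize v xs ↔ ψ.Realize v xs := by
  induction φ using induction_on_exists_not with
  | hqf hψ => exact ⟨_, hψ, fun _ _ => Iff.rfl⟩
  | hnot ih =>
    obtain ⟨ψ, hψ, h⟩ := ih
    exact ⟨ψ.not, hψ.not, fun v xs => (h v xs).not⟩
  | hex ih =>
    obtain ⟨ψ, hψ, h⟩ := ih
    exact ⟨existsLast ψ, isQF_existsLast ψ, fun v xs => by simp [realize_existsLast hψ, h]⟩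
  | hse h => simp only [h.realize_bd_iff]

end LmulPos

/-- **Quantifier elimination for the multiplicative reals with positivity**: every
formula is equivalent, in `ℝ`, to a quantifier-free formula in the same free
variables. -/
theorem Real_mul_pos_QE :
    ∀ (k : ℕ) (φ : LmulPos.Formula (Fin k)),
      ∃ ψ : LmulPos.Formula (Fin k), ψ.IsQF ∧
        ∀ xs : Fin k → ℝ, φ.Realize xs ↔ ψ.Realize xs := by
  intro k φ
  obtain ⟨ψ, hψ, h⟩ := LmulPos.exists_isQF_realize_iff φ
  exact ⟨ψ, hψ, fun xs => h xs _⟩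
end
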